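/- arXiv:0801.2524 — 2 statements merged into one kernel-verified Lean document; each statement's English description precedes it below -/
import Mathlib

section
/- The minimal permutations (with respect to the pattern containment order) having exactly 2 descents are precisely 321, 3142, and 2143. Equivalently: a permutation σ has at least 2 descents if and only if σ contains at least one of the patterns 321, 3142, 2143. -/
def descents (l : List ℕ) : ℕ :=
  (l.zip l.tail).countP (fun p => decide (p.2 < p.1))
def IsPermList (n : ℕ) (l : List ℕ) : Prop :=
  l.Perm (List.range' 1 n)
def OrderIsoList (a b : List ℕ) : Prop :=
  a.length = b.length ∧
    ∀ i j, i < j → j < a.length → (a.getD i 0 < a.getD j 0 ↔ b.getD i 0 < b.getD j 0)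

def IsPattern (π σ : List ℕ) : Prop :=
  ∃ s, s.Sublist σ ∧ OrderIsoList π s

/-!
A permutation with at least two descents contains either two overlapping descents, i.e. a
pattern `321`, or two disjoint ones, a subsequence `a b c d` with `b < a` and `d < c`; comparing
the four distinct values, the latter yields `321` unless `b < d` and `a < c`, and then it is
`3142` or `2143` according as `d < a` or `a < d`. Conversely, descents of a pattern are descents
of its occurrence, and descents can only be lost when passing to a subsequence, so each of the
three patterns forces two descents.
-/

lemma descents_cons_cons (x y : ℕ) (t : List ℕ) :
    descents (x :: y :: t) = descents (y :: t) + if y < x then 1 else 0 := by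
  simp [descents, List.countP_cons]

lemma descents_cons_le_cons_cons (a b : ℕ) (l : List ℕ) :
    descents (a :: l) ≤ descents (a :: b :: l) := by
  cases l with
  | nil => exact Nat.zero_le _
  | cons y t =>
    simp only [descents_cons_cons]
    split_ifs <;> omega

lemma List.Sublist.descents_cons_le {s l : List ℕ} (h : s.Sublist l) (a : ℕ) :
    descents (a :: s) ≤ descents (a :: l) := by
  induction h generalizing a with
  | slnil => rfl
  | cons b _ ih => exact (ih a).trans (descents_cons_le_cons_cons a b _)
  | cons_cons b _ ih =>
    rw [descents_cons_cons, descents_cons_cons]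
    have := ih b
    omega

lemma descents_zero_cons (l : List ℕ) : descents (0 :: l) = descents l := by
  cases l with
  | nil => rfl
  | cons y t => simp [descents_cons_cons]

lemma List.Sublist.descents_le {s l : List ℕ} (h : s.Sublist l) : descents s ≤ descents l := by
  simpa only [descents_zero_cons] using h.descents_cons_le 0

lemma exists_sublist_pair_of_one_le_descents {l : List ℕ} (h : 1 ≤ descents l) :
    ∃ a b, [a, b].Sublist l ∧ b < a := by
  induction l with
  | nil => simp [descents] at h
  | cons x t ih =>
    cases t with
    | nil => simp [descents] at h
    | cons y t' =>
      by_cases hyx : y < x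
      · exact ⟨x, y, ((List.nil_sublist t').cons_cons y).cons_cons x, hyx⟩
      · rw [descents_cons_cons, if_neg hyx] at h
        obtain ⟨a, b, hs, hba⟩ := ih h
        exact ⟨a, b, hs.cons x, hba⟩

lemma exists_sublist_of_two_le_descents {l : List ℕ} (h : 2 ≤ descents l) :
    (∃ a b c, [a, b, c].Sublist l ∧ b < a ∧ c < b) ∨
      ∃ a b c d, [a, b, c, d].Sublist l ∧ b < a ∧ d < c := by
  induction l with
  | nil => simp [descents] at h
  | cons x t ih =>
    cases t with
    | nil => simp [descents] at h
    | cons y t' =>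
      rw [descents_cons_cons] at h
      by_cases hyx : y < x
      · rw [if_pos hyx] at h
        obtain ⟨a, b, hs, hba⟩ := exists_sublist_pair_of_one_le_descents (l := y :: t') (by omega)
        cases hs with
        | cons _ hs => exact Or.inr ⟨x, y, a, b, (hs.cons_cons y).cons_cons x, hyx, hba⟩
        | cons_cons _ hs => exact Or.inl ⟨x, y, b, (hs.cons_cons y).cons_cons x, hyx, hba⟩
      · rw [if_neg hyx] at h
        rcases ih h with ⟨a, b, c, hs, h₁, h₂⟩ | ⟨a, b, c, d, hs, h₁, h₂⟩
        · exact Or.inl ⟨a, b, c, hs.cons x, h₁, h₂⟩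
        · exact Or.inr ⟨a, b, c, d, hs.cons x, h₁, h₂⟩

lemma OrderIsoList.of_cons {a b : ℕ} {π s : List ℕ} (h : OrderIsoList (a :: π) (b :: s)) :
    OrderIsoList π s :=
  ⟨by simpa using h.1, fun i j hij hj => by
    simpa using h.2 (i + 1) (j + 1) (by omega) (by simpa using hj)⟩

lemma OrderIsoList.descents_eq {π s : List ℕ} (h : OrderIsoList π s) (hπ : π.Nodup)
    (hs : s.Nodup) : descents π = descents s := by
  induction π generalizing s with
  | nil => rw [List.length_eq_zero_iff.mp (by simpa using h.1.symm : s.length = 0)]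
  | cons a π ih =>
    obtain ⟨b, s, rfl⟩ := List.exists_cons_of_length_eq_add_one h.1.symm
    cases π with
    | nil => rw [List.length_eq_zero_iff.mp (by simpa using h.1.symm : s.length = 0)]; rfl
    | cons a' π =>
      obtain ⟨b', s, rfl⟩ := List.exists_cons_of_length_eq_add_one (by simpa using h.1.symm)
      have hlt : a < a' ↔ b < b' := by simpa using h.2 0 1 (by omega) (by simp)
      have ha : a ≠ a' := fun e => (List.nodup_cons.mp hπ).1 (by simp [e])
      have hb : b ≠ b' := fun e => (List.nodup_cons.mp hs).1 (by simp [e])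
      have hdesc : a' < a ↔ b' < b := by omega
      rw [descents_cons_cons, descents_cons_cons, ih h.of_cons hπ.of_cons hs.of_cons,
        if_congr hdesc rfl rfl]

lemma IsPattern.trans_sublist {π s l : List ℕ} (h : IsPattern π s) (hs : s.Sublist l) :
    IsPattern π l :=
  let ⟨t, ht, hiso⟩ := h
  ⟨t, ht.trans hs, hiso⟩

lemma IsPattern.descents_le {π l : List ℕ} (h : IsPattern π l) (hπ : π.Nodup) (hl : l.Nodup) :
    descents π ≤ descents l :=
  let ⟨_, hs, hiso⟩ := h
  (hiso.descents_eq hπ (hs.nodup hl)).trans_le hs.descents_le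

lemma isPattern_321 {a b c : ℕ} (hba : b < a) (hcb : c < b) : IsPattern [3, 2, 1] [a, b, c] := by
  refine ⟨_, .refl _, rfl, fun i j hij hj => ?_⟩
  simp only [List.length_cons, List.length_nil] at hj
  interval_cases j <;> interval_cases i <;> simp [List.getD] <;> omega

lemma isPattern_3142 {a b c d : ℕ} (hbd : b < d) (hda : d < a) (hac : a < c) :
    IsPattern [3, 1, 4, 2] [a, b, c, d] := by
  refine ⟨_, .refl _, rfl, fun i j hij hj => ?_⟩
  simp only [List.length_cons, List.length_nil] at hj
  interval_cases j <;> interval_cases i <;> simp [List.getD] <;> omega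

lemma isPattern_2143 {a b c d : ℕ} (hba : b < a) (had : a < d) (hdc : d < c) :
    IsPattern [2, 1, 4, 3] [a, b, c, d] := by
  refine ⟨_, .refl _, rfl, fun i j hij hj => ?_⟩
  simp only [List.length_cons, List.length_nil] at hj
  interval_cases j <;> interval_cases i <;> simp [List.getD] <;> omega

lemma isPattern_of_two_descent_pairs {a b c d : ℕ} (hnd : [a, b, c, d].Nodup) (hba : b < a)
    (hdc : d < c) :
    IsPattern [3, 2, 1] [a, b, c, d] ∨ IsPattern [3, 1, 4, 2] [a, b, c, d] ∨
      IsPattern [2, 1, 4, 3] [a, b, c, d] := by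
  simp only [List.nodup_cons, List.mem_cons, List.not_mem_nil, List.nodup_nil] at hnd
  by_cases hdb : d < b
  · exact Or.inl <| (isPattern_321 hba hdb).trans_sublist <| by simp
  by_cases hca : c < a
  · exact Or.inl <| (isPattern_321 hca hdc).trans_sublist <| by simp
  by_cases hda : d < a
  · exact Or.inr <| Or.inl <| isPattern_3142 (by omega) hda (by omega)
  · exact Or.inr <| Or.inr <| isPattern_2143 hba (by omega) hdc

theorem stmt4 (n : ℕ) (l : List ℕ) (h : IsPermList n l) :
    2 ≤ descents l ↔
      (IsPattern [3, 2, 1] l ∨ IsPattern [3, 1, 4, 2] l ∨ IsPattern [2, 1, 4, 3] l) := by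
  have hl : l.Nodup := h.nodup_iff.mpr List.nodup_range'
  constructor
  · intro hd
    rcases exists_sublist_of_two_le_descents hd with
      ⟨a, b, c, hs, hba, hcb⟩ | ⟨a, b, c, d, hs, hba, hdc⟩
    · exact Or.inl <| (isPattern_321 hba hcb).trans_sublist hs
    · rcases isPattern_of_two_descent_pairs (hs.nodup hl) hba hdc with hp | hp | hp
      · exact Or.inl <| hp.trans_sublist hs
      · exact Or.inr <| Or.inl <| hp.trans_sublist hs
      · exact Or.inr <| Or.inr <| hp.trans_sublist hs
  · rintro (hp | hp | hp) <;> exact le_trans (by decide) (hp.descents_le (by decide) hl)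
end

section
/- A single duplication-loss step of width K applied to a permutation creates at most ⌊K²/4⌋ new inversions: if i of the K window elements are kept in the first copy, at most i(K−i) new inversions are created. -/
def invCount : List ℕ → ℕ
  | [] => 0
  | x :: xs => xs.countP (fun y => decide (y < x)) + invCount xs
inductive Interleave : List ℕ → List ℕ → List ℕ → Prop
  | nil : Interleave [] [] []
  | left {x : ℕ} {l a b : List ℕ} : Interleave l a b → Interleave (x :: l) (x :: a) b
  | right {x : ℕ} {l a b : List ℕ} : Interleave l a b → Interleave (x :: l) a (x :: b)

def DLStep (K : ℕ) (τ σ : List ℕ) : Prop :=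
  ∃ pre w post w1 w2 : List ℕ, τ = pre ++ w ++ post ∧ w.length ≤ K ∧
    Interleave w w1 w2 ∧ σ = pre ++ (w1 ++ w2) ++ post

def DLIter (K : ℕ) : ℕ → List ℕ → List ℕ → Prop
  | 0, τ, σ => τ = σ
  | p + 1, τ, σ => ∃ μ, DLStep K τ μ ∧ DLIter K p μ σ

def ObtainableIn (K p : ℕ) (τ σ : List ℕ) : Prop :=
  ∃ q ≤ p, DLIter K q τ σ

/-! Split the inversions of `pre ++ v ++ post` into those inside each block and those across
blocks. Replacing the window `w` by `w1 ++ w2` only permutes it, so the cross terms with `pre`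
and `post` are unchanged, and the inversions inside `w1` and inside `w2` were already inversions
of `w`. The only new ones are therefore pairs from `w1 × w2`, at most `|w1| |w2| ≤ |w|² / 4`. -/

def crossInvCount (l r : List ℕ) : ℕ :=
  (l.map fun x => r.countP fun y => y < x).sum

lemma invCount_append (l r : List ℕ) :
    invCount (l ++ r) = invCount l + crossInvCount l r + invCount r := by
  induction l with
  | nil => simp [invCount, crossInvCount]
  | cons x xs ih =>
    simp only [List.cons_append, invCount, List.countP_append, crossInvCount, List.map_cons,
      List.sum_cons] at *
    omega

lemma crossInvCount_append_left (a b r : List ℕ) :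
    crossInvCount (a ++ b) r = crossInvCount a r + crossInvCount b r := by
  simp [crossInvCount]

lemma crossInvCount_perm_left {l l' : List ℕ} (h : l.Perm l') (r : List ℕ) :
    crossInvCount l r = crossInvCount l' r :=
  (h.map _).sum_eq

lemma crossInvCount_perm_right (l : List ℕ) {r r' : List ℕ} (h : r.Perm r') :
    crossInvCount l r = crossInvCount l r' := by
  unfold crossInvCount
  congr 1
  exact List.map_congr_left fun x _ => h.countP_eq _

lemma crossInvCount_le_mul_length (l r : List ℕ) :
    crossInvCount l r ≤ l.length * r.length := by
  induction l with
  | nil => simp [crossInvCount]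
  | cons x xs ih =>
    have := List.countP_le_length (p := fun y => decide (y < x)) (l := r)
    simp only [crossInvCount, List.map_cons, List.sum_cons, List.length_cons] at *
    rw [Nat.succ_mul]
    omega

lemma invCount_append_append_of_perm {w v : List ℕ} (h : w.Perm v) (pre post : List ℕ) :
    invCount (pre ++ v ++ post) + invCount w = invCount (pre ++ w ++ post) + invCount v := by
  simp only [invCount_append, crossInvCount_append_left, crossInvCount_perm_right pre h,
    crossInvCount_perm_left h post]
  omega

namespace Interleave

variable {w a b : List ℕ}

lemma perm (h : Interleave w a b) : w.Perm (a ++ b) := by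
  induction h with
  | nil => simp
  | left _ ih => exact ih.cons _
  | right _ ih => exact (ih.cons _).trans List.perm_middle.symm

lemma length_eq (h : Interleave w a b) : w.length = a.length + b.length := by
  rw [h.perm.length_eq, List.length_append]

lemma sublist_left (h : Interleave w a b) : a.Sublist w := by
  induction h with
  | nil => simp
  | left _ ih => exact ih.cons_cons _
  | right _ ih => exact ih.cons _

lemma sublist_right (h : Interleave w a b) : b.Sublist w := by
  induction h with
  | nil => simp
  | left _ ih => exact ih.cons _
  | right _ ih => exact ih.cons_cons _

lemma invCount_add_invCount_le (h : Interleave w a b) :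
    invCount a + invCount b ≤ invCount w := by
  induction h with
  | nil => simp [invCount]
  | @left x l a b h ih =>
    have := h.sublist_left.countP_le (p := fun y => decide (y < x))
    simp only [invCount]
    omega
  | @right x l a b h ih =>
    have := h.sublist_right.countP_le (p := fun y => decide (y < x))
    simp only [invCount]
    omega

lemma invCount_append_le (h : Interleave w a b) :
    invCount (a ++ b) ≤ invCount w + a.length * b.length := by
  have hinside := h.invCount_add_invCount_le
  have hacross := crossInvCount_le_mul_length a b
  rw [invCount_append]
  omega

end Interleave

lemma Nat.mul_le_sq_add_div_four (m n : ℕ) : m * n ≤ (m + n) ^ 2 / 4 := by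
  rw [Nat.le_div_iff_mul_le four_pos, mul_comm, ← mul_assoc]
  exact four_mul_le_sq_add m n

theorem stmt17 (pre w post w1 w2 : List ℕ) (hI : Interleave w w1 w2) :
    invCount (pre ++ (w1 ++ w2) ++ post) ≤
        invCount (pre ++ w ++ post) + w1.length * w2.length ∧
      w1.length * w2.length ≤ w.length ^ 2 / 4 := by
  refine ⟨?_, hI.length_eq ▸ Nat.mul_le_sq_add_div_four _ _⟩
  have hwindow := hI.invCount_append_le
  have hswap := invCount_append_append_of_perm hI.perm pre post
  omega
end
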